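/- An SR instance on 2n agents realizes the identity matrix ID^{2n} (defined by ID[i,j] = i if j ≥ i, and i−1 if j < i) if and only if its preferences are derived from a master list, i.e., there is a total order of the agents and each agent's preferences are obtained by deleting itself from this order. Consequently, the realization of ID^{2n} is unique up to isomorphism. -/

import Mathlib

/-- A Stable Roommates instance on `N` agents: each agent `a` has a strict
preference order over the other `N - 1` agents, given as an injective
enumeration `pref a : Fin (N - 1) → Fin N` avoiding `a` itself. -/
structure SRInstance (N : ℕ) where
  pref : Fin N → Fin (N - 1) → Fin N
  inj : ∀ a : Fin N, Function.Injective (pref a)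
  ne_self : ∀ (a : Fin N) (i : Fin (N - 1)), pref a i ≠ a

namespace SRInstance

/-- The (1-indexed) position of agent `b` in the preference order of agent `a`. -/
def posOf {N : ℕ} (I : SRInstance N) (a b : Fin N) : ℕ :=
  ∑ j ∈ Finset.univ.filter (fun j : Fin (N - 1) => I.pref a j = b), (j.1 + 1)

/-- The mutual attraction entry of agent `a` at index `i`: the position of `a`
in the preference order of the agent ranked `i`-th by `a`. -/
def MA {N : ℕ} (I : SRInstance N) (a : Fin N) (i : Fin (N - 1)) : ℕ :=
  I.posOf (I.pref a i) a

end SRInstance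

/-- The mutual attraction distance between two SR instances on `N` agents:
the minimum over bijections of the agent sets of the summed ℓ1-distances
between matched mutual attraction vectors. -/
noncomputable def distMAD {N : ℕ} (I I' : SRInstance N) : ℕ :=
  sInf { d | ∃ σ : Fin N ≃ Fin N,
    d = ∑ a : Fin N, ∑ i : Fin (N - 1), Nat.dist (I.MA a i) (I'.MA (σ a) i) }

/-- Two SR instances on `N` agents are isomorphic if a renaming `σ` of the
agents transforms one into the other. -/
def SRIsomorphic {N : ℕ} (I I' : SRInstance N) : Prop :=
  ∃ σ : Fin N ≃ Fin N, ∀ (a : Fin N) (i : Fin (N - 1)),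
    I'.pref (σ a) i = σ (I.pref a i)

/-- The identity matrix `ID^{2n}`: entry `(i,j)` (1-indexed value) is `i` if
`j ≥ i` and `i - 1` if `j < i`. -/
def IDmat (n : ℕ) (i : Fin (2 * n)) (j : Fin (2 * n - 1)) : ℕ :=
  if i.1 ≤ j.1 then i.1 + 1 else i.1

/-- `I` realizes `ID^{2n}` (for a suitable ordering of the agents as rows). -/
def RealizesID {n : ℕ} (I : SRInstance (2 * n)) : Prop :=
  ∃ ρ : Fin (2 * n) ≃ Fin (2 * n), ∀ a i, I.MA a i = IDmat n (ρ a) i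

/-- The preferences of `I` are derived from a master list: there is a global
ranking `ml` of the agents such that every agent `a` ranks all other agents
according to `ml`. -/
def FromMasterList {n : ℕ} (I : SRInstance (2 * n)) : Prop :=
  ∃ ml : Fin (2 * n) ≃ Fin (2 * n), ∀ a b c : Fin (2 * n), b ≠ a → c ≠ a →
    (I.posOf a b < I.posOf a c ↔ ml b < ml c)

/-!
In a master-list instance the map `i ↦ ml (pref a i)` is a strictly monotone enumeration of all
ranks except `ml a`, and there is only one such enumeration: agent `a`'s `i`-th choice has rank
`i` or `i + 1` according as `i < ml a` or not. This determines the instance up to renaming, and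
its mutual attraction matrix, which is `ID` with rows ordered by `ml`. Conversely, the row of `b`
in `ID` says that `b` sits at position `ρ b` or `ρ b + 1` in every other list; as positions within
a list are distinct, each list is ordered by `ρ`.
-/

namespace SRInstance

variable {N : ℕ} (I : SRInstance N)

theorem posOf_pref (a : Fin N) (i : Fin (N - 1)) : I.posOf a (I.pref a i) = (i : ℕ) + 1 := by
  have h : Finset.univ.filter (fun j => I.pref a j = I.pref a i) = {i} := by
    ext j
    simp [(I.inj a).eq_iff]
  rw [posOf, h, Finset.sum_singleton]

theorem image_pref (a : Fin N) : Finset.univ.image (I.pref a) = Finset.univ.erase a := by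
  refine Finset.eq_of_subset_of_card_le ?_ ?_
  · intro x hx
    obtain ⟨i, -, rfl⟩ := Finset.mem_image.mp hx
    exact Finset.mem_erase.mpr ⟨I.ne_self a i, Finset.mem_univ _⟩
  · simp [Finset.card_image_of_injective _ (I.inj a)]

theorem exists_pref_eq {a b : Fin N} (h : b ≠ a) : ∃ i, I.pref a i = b := by
  have hb : b ∈ Finset.univ.image (I.pref a) := by simpa [I.image_pref a] using h
  simpa using hb

theorem eq_of_posOf_eq {a b c : Fin N} (hb : b ≠ a) (hc : c ≠ a)
    (h : I.posOf a b = I.posOf a c) : b = c := by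
  obtain ⟨i, rfl⟩ := I.exists_pref_eq hb
  obtain ⟨j, rfl⟩ := I.exists_pref_eq hc
  rw [posOf_pref, posOf_pref] at h
  exact congrArg _ (Fin.ext (by omega))

def IsMasterList (ml : Fin N ≃ Fin N) : Prop :=
  ∀ a b c : Fin N, b ≠ a → c ≠ a → (I.posOf a b < I.posOf a c ↔ ml b < ml c)

end SRInstance

theorem Fin.val_eq_ite_of_strictMono {N : ℕ} {m : Fin N} {f : Fin (N - 1) → Fin N}
    (hf : StrictMono f) (hm : ∀ i, f i ≠ m) (i : Fin (N - 1)) :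
    (f i : ℕ) = if (i : ℕ) < m then (i : ℕ) else (i : ℕ) + 1 := by
  let skip : Fin (N - 1) → Fin N := fun i =>
    ⟨if (i : ℕ) < m then (i : ℕ) else (i : ℕ) + 1, by split_ifs <;> omega⟩
  have hcard : (Finset.univ.erase m).card = N - 1 := by simp
  have hskip_mono : StrictMono skip := fun i j hij => by
    simp only [skip, Fin.mk_lt_mk]
    split_ifs <;> omega
  have hskip_ne : ∀ i, skip i ≠ m := fun i h => by
    simp only [skip, Fin.ext_iff] at h
    split_ifs at h <;> omega
  have hf_eq := Finset.orderEmbOfFin_unique hcard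
    (fun i => Finset.mem_erase.mpr ⟨hm i, Finset.mem_univ _⟩) hf
  have hskip_eq := Finset.orderEmbOfFin_unique hcard
    (fun i => Finset.mem_erase.mpr ⟨hskip_ne i, Finset.mem_univ _⟩) hskip_mono
  exact congrArg Fin.val (congrFun (hf_eq.trans hskip_eq.symm) i)

namespace SRInstance

variable {N : ℕ} {I : SRInstance N} {ml : Fin N ≃ Fin N}

theorem IsMasterList.strictMono_pref (hml : I.IsMasterList ml) (a : Fin N) :
    StrictMono fun i => ml (I.pref a i) := fun i j hij =>
  (hml a _ _ (I.ne_self a i) (I.ne_self a j)).mp <| by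
    rw [posOf_pref, posOf_pref]
    exact Nat.succ_lt_succ hij

theorem IsMasterList.val_pref (hml : I.IsMasterList ml) (a : Fin N) (i : Fin (N - 1)) :
    (ml (I.pref a i) : ℕ) = if (i : ℕ) < ml a then (i : ℕ) else (i : ℕ) + 1 :=
  Fin.val_eq_ite_of_strictMono (hml.strictMono_pref a)
    (fun i h => I.ne_self a i (ml.injective h)) i

theorem IsMasterList.MA_eq (hml : I.IsMasterList ml) (a : Fin N) (i : Fin (N - 1)) :
    I.MA a i = if (ml a : ℕ) ≤ i then (ml a : ℕ) + 1 else (ml a : ℕ) := by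
  obtain ⟨j, hj⟩ := I.exists_pref_eq (I.ne_self a i).symm
  have hb := hml.val_pref a i
  have ha := hml.val_pref (I.pref a i) j
  rw [hj] at ha
  have hMA : I.MA a i = (j : ℕ) + 1 := by
    rw [MA, ← I.posOf_pref (I.pref a i) j, hj]
  rw [hMA]
  split_ifs at ha hb ⊢ <;> omega

theorem le_posOf_of_MA_eq {ρ : Fin N → Fin N}
    (h : ∀ a i, I.MA a i = if (ρ a : ℕ) ≤ i then (ρ a : ℕ) + 1 else (ρ a : ℕ))
    {a b : Fin N} (hb : b ≠ a) :
    (ρ b : ℕ) ≤ I.posOf a b ∧ I.posOf a b ≤ ρ b + 1 := by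
  obtain ⟨i, hi⟩ := I.exists_pref_eq hb.symm
  have hMA := h b i
  rw [MA, hi] at hMA
  split_ifs at hMA <;> omega

theorem isMasterList_iff_MA_eq {ρ : Fin N ≃ Fin N} :
    I.IsMasterList ρ ↔
      ∀ a i, I.MA a i = if (ρ a : ℕ) ≤ i then (ρ a : ℕ) + 1 else (ρ a : ℕ) := by
  refine ⟨fun hml => hml.MA_eq, fun h a b c hb hc => ?_⟩
  have hb' := le_posOf_of_MA_eq h hb
  have hc' := le_posOf_of_MA_eq h hc
  have hne : b ≠ c → I.posOf a b ≠ I.posOf a c := mt (I.eq_of_posOf_eq hb hc)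
  have hρ : b ≠ c → (ρ b : ℕ) ≠ ρ c := fun hbc h => hbc (ρ.injective (Fin.ext h))
  rw [Fin.lt_def]
  by_cases hbc : b = c
  · subst hbc; simp
  · have := hne hbc; have := hρ hbc; omega

theorem IsMasterList.isomorphic {I' : SRInstance N} {ml' : Fin N ≃ Fin N}
    (hml : I.IsMasterList ml) (hml' : I'.IsMasterList ml') : SRIsomorphic I I' := by
  refine ⟨ml.trans ml'.symm, fun a i => ml'.injective (Fin.ext ?_)⟩
  simp only [Equiv.trans_apply, Equiv.apply_symm_apply]
  rw [hml'.val_pref, hml.val_pref, Equiv.apply_symm_apply]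

end SRInstance

/-- An SR instance on `2n` agents realizes `ID^{2n}` iff its preferences are
derived from a master list; consequently, the realization of `ID^{2n}` is
unique up to isomorphism. -/
theorem realizesID_iff_masterList (n : ℕ) :
    (∀ I : SRInstance (2 * n), RealizesID I ↔ FromMasterList I) ∧
    (∀ I I' : SRInstance (2 * n), RealizesID I → RealizesID I' →
      SRIsomorphic I I') := by
  have realizesID_iff (I : SRInstance (2 * n)) : RealizesID I ↔ FromMasterList I :=
    exists_congr fun _ => SRInstance.isMasterList_iff_MA_eq.symm
  refine ⟨realizesID_iff, fun I I' hI hI' => ?_⟩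
  obtain ⟨ml, hml⟩ := (realizesID_iff I).mp hI
  obtain ⟨ml', hml'⟩ := (realizesID_iff I').mp hI'
  exact SRInstance.IsMasterList.isomorphic hml hml'
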